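/- arXiv:2108.06711 — 3 statements merged into one kernel-verified Lean document; each statement's English description precedes it below -/
import Mathlib

section
/- For every dimension d ≥ 1, every continuous function f : ℝ^{2d} → ℝ, every compact set K ⊆ ℝ^{2d}, and every ε > 0, there exist n ∈ ℕ and parameters w_1,…,w_n ∈ ℂ^d, v_1,…,v_n, b_1,…,b_n, a ∈ ℂ such that the one-hidden-layer complex-reaction network f_CR(x) = Re(∑_{i=1}^n v_i · σ(w_i^T x − b_i) − a) satisfies sup_{x ∈ K} |f(x) − f_CR(x)| < ε. -/
open Complex Real

/-- The zReLU activation: `σ(z) = z` if `(Re z ≥ 0 ∧ Im z ≥ 0) ∨ (Re z ≤ 0 ∧ Im z ≤ 0)`,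
and `σ(z) = 0` otherwise. -/
noncomputable def zReLU (z : ℂ) : ℂ :=
  if (0 ≤ z.re ∧ 0 ≤ z.im) ∨ (z.re ≤ 0 ∧ z.im ≤ 0) then z else 0

/-- One-hidden-layer complex-reaction network with `n` hidden neurons:
`f_CR(x) = Re(∑ i, v i * σ(wᵢᵀ x − b i) − a)`. -/
noncomputable def fCR {d n : ℕ} (w : Fin n → Fin d → ℂ) (v b : Fin n → ℂ) (a : ℂ)
    (x : Fin d → ℂ) : ℝ :=
  (∑ i, v i * zReLU ((∑ k, w i k * x k) - b i) - a).re

/-- Identification of `ℝ^{2d}` with `ℂ^d`: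
`(x_1, …, x_{2d}) ↦ (x_1 + i·x_{d+1}, …, x_d + i·x_{2d})`. -/
noncomputable def toC (d : ℕ) (x : EuclideanSpace ℝ (Fin (2 * d))) : Fin d → ℂ :=
  fun k => ⟨x ⟨k.1, by have := k.2; omega⟩, x ⟨d + k.1, by have := k.2; omega⟩⟩


/-! ### 1-D piecewise linear networks -/

noncomputable def PLnet (n : ℕ) (c v : Fin n → ℝ) (a : ℝ) : ℝ → ℝ :=
  fun t => a + ∑ i, v i * min (t - c i) 0

def IsPLnet (g : ℝ → ℝ) : Prop := ∃ n c v a, g = PLnet n c v a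

lemma isPLnet_const (a : ℝ) : IsPLnet (fun _ => a) :=
  ⟨0, fun i => i.elim0, fun i => i.elim0, a, by funext t; simp [PLnet]⟩

lemma isPLnet_add {g h : ℝ → ℝ} (hg : IsPLnet g) (hh : IsPLnet h) :
    IsPLnet (fun t => g t + h t) := by
  obtain ⟨n, c, v, a, rfl⟩ := hg
  obtain ⟨m, c', v', a', rfl⟩ := hh
  refine ⟨n + m, Fin.append c c', Fin.append v v', a + a', ?_⟩
  funext t
  simp only [PLnet, Fin.sum_univ_add, Fin.append_left, Fin.append_right]
  ring

lemma isPLnet_ramp (c₁ c₂ m : ℝ) :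
    IsPLnet (fun t => m * (min (t - c₁) 0 - min (t - c₂) 0)) := by
  refine ⟨2, ![c₁, c₂], ![m, -m], 0, ?_⟩
  funext t
  simp [PLnet, Fin.sum_univ_two]
  ring

lemma isPLnet_finsum {ι : Type*} (s : Finset ι) (F : ι → ℝ → ℝ)
    (h : ∀ i ∈ s, IsPLnet (F i)) : IsPLnet (fun t => ∑ i ∈ s, F i t) := by
  classical
  induction s using Finset.cons_induction with
  | empty => simpa using isPLnet_const 0
  | cons i s his ih =>
      simp only [Finset.sum_cons]
      exact isPLnet_add (h i (Finset.mem_cons_self i s))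
        (ih fun j hj => h j (Finset.mem_cons_of_mem hj))

/-- 1-D piecewise-linear approximation of a continuous function on a compact interval. -/
lemma pl_approx (φ : ℝ → ℝ) (hφ : Continuous φ) (A B ε : ℝ) (hε : 0 < ε) :
    ∃ g, IsPLnet g ∧ ∀ t ∈ Set.Icc A B, |φ t - g t| < ε := by
  by_cases hAB : A < B
  · -- uniform continuity
    have huc : UniformContinuousOn φ (Set.Icc A B) :=
      isCompact_Icc.uniformContinuousOn_of_continuous hφ.continuousOn
    rw [Metric.uniformContinuousOn_iff] at huc
    obtain ⟨δ, hδ, hucd⟩ := huc (ε / 2) (by positivity)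
    obtain ⟨N, hN⟩ := exists_nat_gt ((B - A) / δ)
    have hN0 : 0 < (N : ℝ) := lt_trans (div_pos (by linarith) hδ) hN
    have hN1 : 0 < N := Nat.cast_pos.mp hN0
    have hNne : (N : ℝ) ≠ 0 := ne_of_gt hN0
    set h : ℝ := (B - A) / N with hh_def
    have hh : 0 < h := div_pos (by linarith) hN0
    have hhδ : h < δ := by
      rw [div_lt_iff₀ hN0]
      rw [div_lt_iff₀ hδ] at hN
      linarith [mul_comm (N : ℝ) δ]
    set c : ℕ → ℝ := fun j => A + j * h with hc_def
    have hcN : c N = B := by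
      simp only [hc_def, hh_def]
      field_simp
      ring
    have hcmono : ∀ {i j : ℕ}, i ≤ j → c i ≤ c j := by
      intro i j hij
      simp only [hc_def]
      have : (i : ℝ) ≤ j := Nat.cast_le.mpr hij
      nlinarith
    have hcIcc : ∀ {j : ℕ}, j ≤ N → c j ∈ Set.Icc A B := by
      intro j hj
      constructor
      · simp only [hc_def]; nlinarith [(Nat.cast_nonneg j : (0:ℝ) ≤ j)]
      · rw [← hcN]; exact hcmono hj
    set m : ℕ → ℝ := fun j => (φ (c j) - φ (c (j + 1))) / h with hm_def
    refine ⟨fun t => φ B + ∑ j ∈ Finset.range N,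
      m j * (min (t - c j) 0 - min (t - c (j + 1)) 0), ?_, ?_⟩
    · exact isPLnet_add (isPLnet_const (φ B))
        (isPLnet_finsum _ _ fun j _ => isPLnet_ramp (c j) (c (j + 1)) (m j))
    intro t ht
    obtain ⟨htA, htB⟩ := ht
    -- the index k with c k ≤ t ≤ c (k+1)
    set k : ℕ := min ⌊(t - A) / h⌋₊ (N - 1) with hk_def
    have hkN : k < N := by
      have : k ≤ N - 1 := min_le_right _ _
      omega
    have hk1N : k + 1 ≤ N := hkN
    have htk : c k ≤ t := by
      have h1 : (k : ℝ) ≤ ⌊(t - A) / h⌋₊ := by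
        exact_mod_cast min_le_left _ _
      have h2 : (⌊(t - A) / h⌋₊ : ℝ) ≤ (t - A) / h :=
        Nat.floor_le (div_nonneg (by linarith) hh.le)
      have : (k : ℝ) * h ≤ t - A := by
        rw [← le_div_iff₀ hh]; linarith
      simp only [hc_def]; linarith
    have htk1 : t ≤ c (k + 1) := by
      rcases le_or_gt ⌊(t - A) / h⌋₊ (N - 1) with hle | hlt
      · have hk_eq : k = ⌊(t - A) / h⌋₊ := min_eq_left hle
        have h2 : (t - A) / h < ⌊(t - A) / h⌋₊ + 1 := Nat.lt_floor_add_one _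
        have : t - A < ((k : ℝ) + 1) * h := by
          rw [hk_eq]
          rw [div_lt_iff₀ hh] at h2
          push_cast
          linarith
        simp only [hc_def]; push_cast; linarith
      · have hk_eq : k = N - 1 := min_eq_right (le_of_lt hlt)
        have : k + 1 = N := by omega
        rw [this, hcN]; exact htB
    -- evaluate the network at t
    have hsum : ∑ j ∈ Finset.range N, m j * (min (t - c j) 0 - min (t - c (j + 1)) 0)
        = (φ (c k) - φ (c (k + 1))) * ((c (k + 1) - t) / h)
          + (φ (c (k + 1)) - φ B) := by
      have hsplit : Finset.range N = Finset.Ico 0 N := by rw [Finset.range_eq_Ico]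
      rw [hsplit, ← Finset.sum_Ico_consecutive _ (Nat.zero_le k) (le_of_lt hkN),
        Finset.sum_eq_sum_Ico_succ_bot hkN]
      have e1 : ∑ j ∈ Finset.Ico 0 k, m j * (min (t - c j) 0 - min (t - c (j + 1)) 0) = 0 := by
        apply Finset.sum_eq_zero
        intro j hj
        rw [Finset.mem_Ico] at hj
        have hj1 : c (j + 1) ≤ t := le_trans (hcmono hj.2) htk
        have hj0 : c j ≤ t := le_trans (hcmono (Nat.le_succ j)) hj1
        rw [min_eq_right (by linarith), min_eq_right (by linarith)]
        ring
      have e2 : m k * (min (t - c k) 0 - min (t - c (k + 1)) 0)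
          = (φ (c k) - φ (c (k + 1))) * ((c (k + 1) - t) / h) := by
        rw [min_eq_right (by linarith), min_eq_left (by linarith)]
        simp only [hm_def]
        field_simp
        ring
      have e3 : ∑ j ∈ Finset.Ico (k + 1) N, m j * (min (t - c j) 0 - min (t - c (j + 1)) 0)
          = φ (c (k + 1)) - φ B := by
        have : ∀ j ∈ Finset.Ico (k + 1) N,
            m j * (min (t - c j) 0 - min (t - c (j + 1)) 0) = φ (c j) - φ (c (j + 1)) := by
          intro j hj
          rw [Finset.mem_Ico] at hj
          have hj0 : t ≤ c j := le_trans htk1 (hcmono hj.1)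
          have hj1 : t ≤ c (j + 1) := le_trans hj0 (hcmono (Nat.le_succ j))
          have hcc : c (j + 1) - c j = h := by simp only [hc_def]; push_cast; ring
          rw [min_eq_left (by linarith), min_eq_left (by linarith),
            show t - c j - (t - c (j + 1)) = h by linarith]
          exact div_mul_cancel₀ _ (ne_of_gt hh)
        rw [Finset.sum_congr rfl this, Finset.sum_Ico_eq_sub _ hk1N,
          Finset.sum_range_sub' (fun j => φ (c j)), Finset.sum_range_sub' (fun j => φ (c j)),
          hcN]
        ring
      rw [e1, e2, e3]
      ring
    show |φ t - (φ B + ∑ j ∈ Finset.range N,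
      m j * (min (t - c j) 0 - min (t - c (j + 1)) 0))| < ε
    rw [hsum]
    set lam : ℝ := (c (k + 1) - t) / h with hlam_def
    have hlam0 : 0 ≤ lam := div_nonneg (by linarith) hh.le
    have hck1 : c (k + 1) - c k = h := by simp only [hc_def]; push_cast; ring
    have hlam1 : lam ≤ 1 := by
      rw [hlam_def, div_le_one hh]
      linarith
    have d1 : |φ t - φ (c (k + 1))| < ε / 2 := by
      have := hucd t ⟨htA, htB⟩ (c (k + 1)) (hcIcc hk1N)
        (by rw [Real.dist_eq, abs_of_nonpos (by linarith)]; linarith)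
      rwa [Real.dist_eq] at this
    have d2 : |φ (c k) - φ (c (k + 1))| < ε / 2 := by
      have := hucd (c k) (hcIcc (le_of_lt hkN)) (c (k + 1)) (hcIcc hk1N)
        (by rw [Real.dist_eq, abs_of_nonpos (by linarith)]; linarith)
      rwa [Real.dist_eq] at this
    have hrw : φ t - (φ B + ((φ (c k) - φ (c (k + 1))) * lam + (φ (c (k + 1)) - φ B)))
        = (φ t - φ (c (k + 1))) - lam * (φ (c k) - φ (c (k + 1))) := by ring
    rw [hrw]
    calc |(φ t - φ (c (k + 1))) - lam * (φ (c k) - φ (c (k + 1)))|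
        ≤ |φ t - φ (c (k + 1))| + |lam * (φ (c k) - φ (c (k + 1)))| := abs_sub _ _
      _ = |φ t - φ (c (k + 1))| + lam * |φ (c k) - φ (c (k + 1))| := by
          rw [abs_mul, _root_.abs_of_nonneg hlam0]
      _ < ε := by nlinarith [abs_nonneg (φ (c k) - φ (c (k + 1)))]
  · -- degenerate interval
    refine ⟨fun _ => φ A, isPLnet_const (φ A), ?_⟩
    intro t ht
    obtain ⟨h1, h2⟩ := ht
    have : t = A := le_antisymm (le_trans h2 (le_of_not_gt hAB)) h1
    rw [this]
    simpa using hε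

/-! ### Ridge networks on `ℝ^{2d}` -/

def lo (d : ℕ) (k : Fin d) : Fin (2 * d) := ⟨k.1, by have := k.2; omega⟩
def hi (d : ℕ) (k : Fin d) : Fin (2 * d) := ⟨d + k.1, by have := k.2; omega⟩

/-- A generic linear functional on `ℝ^{2d}`, parametrized by `p q : Fin d → ℝ`. -/
noncomputable def Lf (d : ℕ) (p q : Fin d → ℝ) (x : EuclideanSpace ℝ (Fin (2 * d))) : ℝ :=
  ∑ k, (p k * x (lo d k) + q k * x (hi d k))

noncomputable def RNet (d n : ℕ) (p q : Fin n → Fin d → ℝ) (c v : Fin n → ℝ) (a : ℝ)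
    (x : EuclideanSpace ℝ (Fin (2 * d))) : ℝ :=
  a + ∑ i, v i * min (Lf d (p i) (q i) x - c i) 0

def IsRNet (d : ℕ) (g : EuclideanSpace ℝ (Fin (2 * d)) → ℝ) : Prop :=
  ∃ n p q c v a, g = RNet d n p q c v a

lemma euclidean_abs_apply_le_norm {m : ℕ} (x : EuclideanSpace ℝ (Fin m)) (j : Fin m) :
    |x j| ≤ ‖x‖ := by
  rw [EuclideanSpace.norm_eq, ← Real.sqrt_sq_eq_abs]
  apply Real.sqrt_le_sqrt
  have : ‖x j‖ ^ 2 = x j ^ 2 := by rw [Real.norm_eq_abs, _root_.sq_abs]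
  rw [← this]
  exact Finset.single_le_sum (f := fun i => ‖x i‖ ^ 2)
    (fun i _ => by positivity) (Finset.mem_univ j)

lemma abs_Lf_le (d : ℕ) (p q : Fin d → ℝ) (x : EuclideanSpace ℝ (Fin (2 * d))) :
    |Lf d p q x| ≤ (∑ k, (|p k| + |q k|)) * ‖x‖ := by
  rw [Lf, Finset.sum_mul]
  refine le_trans (Finset.abs_sum_le_sum_abs _ _) (Finset.sum_le_sum fun k _ => ?_)
  rw [add_mul]
  refine le_trans (abs_add_le _ _) (add_le_add ?_ ?_) <;>
    rw [abs_mul] <;>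
    exact mul_le_mul_of_nonneg_left (euclidean_abs_apply_le_norm _ _) (abs_nonneg _)

lemma continuous_Lf (d : ℕ) (p q : Fin d → ℝ) : Continuous (Lf d p q) := by
  refine continuous_finset_sum _ fun k _ => Continuous.add ?_ ?_ <;>
    exact continuous_const.mul (EuclideanSpace.proj _).continuous

/-- key neuron computation -/
lemma neuron_re (α : ℝ) (z : ℂ) (hz : z.im < 0) :
    ((α : ℂ) * zReLU z).re = α * min z.re 0 := by
  rw [zReLU]
  by_cases hre : z.re ≤ 0
  · rw [if_pos (Or.inr ⟨hre, hz.le⟩), re_ofReal_mul, min_eq_left hre]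
  · rw [if_neg, mul_zero, Complex.zero_re, min_eq_right (le_of_not_ge hre), mul_zero]
    push_neg at hre
    rintro (⟨h1, h2⟩ | ⟨h1, h2⟩) <;> linarith

lemma rnet_to_fCR (d : ℕ) (K : Set (EuclideanSpace ℝ (Fin (2 * d)))) (hK : IsCompact K)
    (n : ℕ) (p q : Fin n → Fin d → ℝ) (c v : Fin n → ℝ) (a : ℝ) :
    ∃ (m : ℕ) (w : Fin m → Fin d → ℂ) (V b : Fin m → ℂ) (A : ℂ),
      ∀ x ∈ K, fCR w V b A (toC d x) = RNet d n p q c v a x := by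
  obtain ⟨R₀, hR₀⟩ := isBounded_iff_forall_norm_le.mp hK.isBounded
  set R : ℝ := max R₀ 0 with hR_def
  have hR : ∀ x ∈ K, ‖x‖ ≤ R := fun x hx => le_trans (hR₀ x hx) (le_max_left _ _)
  have hR0 : 0 ≤ R := le_max_right _ _
  -- imaginary-part bound for each neuron
  set γ : Fin n → ℝ := fun i => (∑ k, (|(-(q i k))| + |p i k|)) * R + 1 with hγ_def
  refine ⟨n + 1,
    Fin.snoc (fun i k => ⟨p i k, -q i k⟩) (fun _ => 0),
    Fin.snoc (fun i => ((v i : ℝ) : ℂ)) (((-a : ℝ) : ℂ)),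
    Fin.snoc (fun i => ⟨c i, γ i⟩) ⟨1, 1⟩,
    0, ?_⟩
  intro x hx
  rw [fCR]
  simp only [sub_zero]
  rw [Complex.re_sum, Fin.sum_univ_castSucc]
  simp only [Fin.snoc_castSucc, Fin.snoc_last]
  have hterm : ∀ i : Fin n,
      (((v i : ℝ) : ℂ) * zReLU ((∑ k, (⟨p i k, -q i k⟩ : ℂ) * toC d x k) - ⟨c i, γ i⟩)).re
        = v i * min (Lf d (p i) (q i) x - c i) 0 := by
    intro i
    set z : ℂ := (∑ k, (⟨p i k, -q i k⟩ : ℂ) * toC d x k) - ⟨c i, γ i⟩ with hz_def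
    have hzre : z.re = Lf d (p i) (q i) x - c i := by
      rw [hz_def, Complex.sub_re, Complex.re_sum]
      congr 1
      rw [Lf]
      refine Finset.sum_congr rfl fun k _ => ?_
      rw [Complex.mul_re]
      show p i k * x (lo d k) - -q i k * x (hi d k) = _
      ring
    have hzim : z.im < 0 := by
      rw [hz_def, Complex.sub_im, Complex.im_sum]
      have him : ∑ k, ((⟨p i k, -q i k⟩ : ℂ) * toC d x k).im
          = Lf d (fun k => -q i k) (p i) x := by
        rw [Lf]
        refine Finset.sum_congr rfl fun k _ => ?_
        rw [Complex.mul_im]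
        show p i k * x (hi d k) + -q i k * x (lo d k) = _
        ring
      rw [him]
      have hb := abs_Lf_le d (fun k => -q i k) (p i) x
      have : Lf d (fun k => -q i k) (p i) x ≤ (∑ k, (|(-(q i k))| + |p i k|)) * R := by
        refine le_trans (le_abs_self _) (le_trans hb ?_)
        exact mul_le_mul_of_nonneg_left (hR x hx)
          (Finset.sum_nonneg fun k _ => by positivity)
      simp only [hγ_def]
      show _ - ((∑ k, (|(-(q i k))| + |p i k|)) * R + 1) < 0
      linarith
    rw [neuron_re _ _ hzim, hzre]
  rw [Finset.sum_congr rfl fun i _ => hterm i]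
  -- the extra constant neuron
  have hlast : (((-a : ℝ) : ℂ) * zReLU ((∑ k, (0 : ℂ) * toC d x k) - ⟨1, 1⟩)).re = a := by
    set z : ℂ := (∑ k, (0 : ℂ) * toC d x k) - ⟨1, 1⟩ with hz_def
    have hzre : z.re = -1 := by
      rw [hz_def, Complex.sub_re, Complex.re_sum]
      simp
    have hzim : z.im < 0 := by
      rw [hz_def, Complex.sub_im, Complex.im_sum]
      simp
    rw [neuron_re _ _ hzim, hzre]
    norm_num
  rw [hlast, RNet]
  ring

/-! ### closure properties of ridge nets -/

lemma isRNet_const (d : ℕ) (a : ℝ) : IsRNet d (fun _ => a) :=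
  ⟨0, fun i => i.elim0, fun i => i.elim0, fun i => i.elim0, fun i => i.elim0, a, by
    funext x; simp [RNet]⟩

lemma isRNet_add {d : ℕ} {g h : EuclideanSpace ℝ (Fin (2 * d)) → ℝ}
    (hg : IsRNet d g) (hh : IsRNet d h) : IsRNet d (fun x => g x + h x) := by
  obtain ⟨n, p, q, c, v, a, rfl⟩ := hg
  obtain ⟨n', p', q', c', v', a', rfl⟩ := hh
  refine ⟨n + n', Fin.append p p', Fin.append q q', Fin.append c c', Fin.append v v',
    a + a', ?_⟩
  funext x
  simp only [RNet, Fin.sum_univ_add, Fin.append_left, Fin.append_right]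
  ring

lemma isRNet_smul {d : ℕ} (r : ℝ) {g : EuclideanSpace ℝ (Fin (2 * d)) → ℝ}
    (hg : IsRNet d g) : IsRNet d (fun x => r * g x) := by
  obtain ⟨n, p, q, c, v, a, rfl⟩ := hg
  refine ⟨n, p, q, c, fun i => r * v i, r * a, ?_⟩
  funext x
  simp only [RNet, Finset.mul_sum]
  rw [mul_add, Finset.mul_sum]
  congr 1
  exact Finset.sum_congr rfl fun i _ => by ring

lemma isRNet_comp {d : ℕ} {P : ℝ → ℝ} (hP : IsPLnet P) (p q : Fin d → ℝ) :
    IsRNet d (fun x => P (Lf d p q x)) := by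
  obtain ⟨n, c, v, a, rfl⟩ := hP
  exact ⟨n, fun _ => p, fun _ => q, c, v, a, rfl⟩

/-! ### Density of ridge nets via Stone–Weierstrass -/

lemma Lf_add (d : ℕ) (p q p' q' : Fin d → ℝ) (x : EuclideanSpace ℝ (Fin (2 * d))) :
    Lf d (p + p') (q + q') x = Lf d p q x + Lf d p' q' x := by
  simp only [Lf, Pi.add_apply, ← Finset.sum_add_distrib]
  exact Finset.sum_congr rfl fun k _ => by ring

lemma Lf_sub (d : ℕ) (p q p' q' : Fin d → ℝ) (x : EuclideanSpace ℝ (Fin (2 * d))) :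
    Lf d (p - p') (q - q') x = Lf d p q x - Lf d p' q' x := by
  simp only [Lf, Pi.sub_apply, ← Finset.sum_sub_distrib]
  exact Finset.sum_congr rfl fun k _ => by ring

lemma ridge_dense (d : ℕ) (f : EuclideanSpace ℝ (Fin (2 * d)) → ℝ) (hf : Continuous f)
    (K : Set (EuclideanSpace ℝ (Fin (2 * d)))) (hK : IsCompact K) (ε : ℝ) (hε : 0 < ε) :
    ∃ g, IsRNet d g ∧ ∀ x ∈ K, |f x - g x| < ε := by
  haveI : CompactSpace K := isCompact_iff_compactSpace.mp hK
  obtain ⟨R₀, hR₀⟩ := isBounded_iff_forall_norm_le.mp hK.isBounded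
  set R : ℝ := max R₀ 0 with hR_def
  have hR : ∀ x ∈ K, ‖x‖ ≤ R := fun x hx => le_trans (hR₀ x hx) (le_max_left _ _)
  have hR0 : 0 ≤ R := le_max_right _ _
  -- the trigonometric ridge functions on K
  let cosMap : (Fin d → ℝ) → (Fin d → ℝ) → C(K, ℝ) := fun p q =>
    ⟨fun x => Real.cos (Lf d p q x.1),
      Real.continuous_cos.comp ((continuous_Lf d p q).comp continuous_subtype_val)⟩
  let sinMap : (Fin d → ℝ) → (Fin d → ℝ) → C(K, ℝ) := fun p q =>
    ⟨fun x => Real.sin (Lf d p q x.1),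
      Real.continuous_sin.comp ((continuous_Lf d p q).comp continuous_subtype_val)⟩
  set S : Set C(K, ℝ) := {g | ∃ p q, g = cosMap p q ∨ g = sinMap p q} with hS_def
  set T : Set C(K, ℝ) := insert 1 S with hT_def
  set B0 : Submodule ℝ C(K, ℝ) := Submodule.span ℝ T with hB0_def
  -- product of two generators lies in the span
  have hmulgen : ∀ g ∈ T, ∀ h ∈ T, g * h ∈ B0 := by
    have hSmem : ∀ p q, cosMap p q ∈ B0 :=
      fun p q => Submodule.subset_span (Set.mem_insert_of_mem _ ⟨p, q, Or.inl rfl⟩)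
    have hSmem' : ∀ p q, sinMap p q ∈ B0 :=
      fun p q => Submodule.subset_span (Set.mem_insert_of_mem _ ⟨p, q, Or.inr rfl⟩)
    rintro g (rfl | ⟨p, q, (rfl | rfl)⟩) h hh
    · rw [one_mul]; exact Submodule.subset_span hh
    all_goals rcases hh with (rfl | ⟨p', q', (rfl | rfl)⟩)
    · rw [mul_one]; exact hSmem p q
    · -- cos * cos
      have : cosMap p q * cosMap p' q'
          = (2⁻¹ : ℝ) • cosMap (p + p') (q + q') + (2⁻¹ : ℝ) • cosMap (p - p') (q - q') := by
        ext x
        simp only [ContinuousMap.mul_apply, ContinuousMap.add_apply, ContinuousMap.smul_apply,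
          ContinuousMap.coe_mk, smul_eq_mul, cosMap, Lf_add, Lf_sub]
        have h1 := Real.cos_add (Lf d p q x.1) (Lf d p' q' x.1)
        have h2 := Real.cos_sub (Lf d p q x.1) (Lf d p' q' x.1)
        linarith
      rw [this]
      exact Submodule.add_mem _ (Submodule.smul_mem _ _ (hSmem _ _))
        (Submodule.smul_mem _ _ (hSmem _ _))
    · -- cos * sin
      have : cosMap p q * sinMap p' q'
          = (2⁻¹ : ℝ) • sinMap (p + p') (q + q') - (2⁻¹ : ℝ) • sinMap (p - p') (q - q') := by
        ext x
        simp only [ContinuousMap.mul_apply, ContinuousMap.sub_apply, ContinuousMap.smul_apply,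
          ContinuousMap.coe_mk, smul_eq_mul, cosMap, sinMap, Lf_add, Lf_sub]
        have h1 := Real.sin_add (Lf d p q x.1) (Lf d p' q' x.1)
        have h2 := Real.sin_sub (Lf d p q x.1) (Lf d p' q' x.1)
        linarith
      rw [this]
      exact Submodule.sub_mem _ (Submodule.smul_mem _ _ (hSmem' _ _))
        (Submodule.smul_mem _ _ (hSmem' _ _))
    · rw [mul_one]; exact hSmem' p q
    · -- sin * cos
      have : sinMap p q * cosMap p' q'
          = (2⁻¹ : ℝ) • sinMap (p + p') (q + q') + (2⁻¹ : ℝ) • sinMap (p - p') (q - q') := by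
        ext x
        simp only [ContinuousMap.mul_apply, ContinuousMap.add_apply, ContinuousMap.smul_apply,
          ContinuousMap.coe_mk, smul_eq_mul, cosMap, sinMap, Lf_add, Lf_sub]
        have h1 := Real.sin_add (Lf d p q x.1) (Lf d p' q' x.1)
        have h2 := Real.sin_sub (Lf d p q x.1) (Lf d p' q' x.1)
        linarith
      rw [this]
      exact Submodule.add_mem _ (Submodule.smul_mem _ _ (hSmem' _ _))
        (Submodule.smul_mem _ _ (hSmem' _ _))
    · -- sin * sin
      have : sinMap p q * sinMap p' q'
          = (2⁻¹ : ℝ) • cosMap (p - p') (q - q') - (2⁻¹ : ℝ) • cosMap (p + p') (q + q') := by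
        ext x
        simp only [ContinuousMap.mul_apply, ContinuousMap.sub_apply, ContinuousMap.smul_apply,
          ContinuousMap.coe_mk, smul_eq_mul, cosMap, sinMap, Lf_add, Lf_sub]
        have h1 := Real.cos_add (Lf d p q x.1) (Lf d p' q' x.1)
        have h2 := Real.cos_sub (Lf d p q x.1) (Lf d p' q' x.1)
        linarith
      rw [this]
      exact Submodule.sub_mem _ (Submodule.smul_mem _ _ (hSmem _ _))
        (Submodule.smul_mem _ _ (hSmem _ _))
  have honemem : (1 : C(K, ℝ)) ∈ B0 := Submodule.subset_span (Set.mem_insert _ _)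
  have hmul : ∀ x y : C(K, ℝ), x ∈ B0 → y ∈ B0 → x * y ∈ B0 := by
    intro x y hx hy
    have h1 : x * y ∈ B0 * B0 := Submodule.mul_mem_mul hx hy
    have h2 : B0 * B0 ≤ B0 := by
      rw [hB0_def, Submodule.span_mul_span]
      rw [Submodule.span_le]
      rintro _ ⟨g, hg, h, hh, rfl⟩
      exact hmulgen g hg h hh
    exact h2 h1
  set Balg : Subalgebra ℝ C(K, ℝ) := Submodule.toSubalgebra B0 honemem hmul with hBalg_def
  -- separation of points
  have hsep : Balg.SeparatesPoints := by
    intro x y hxy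
    have hxy1 : x.1 ≠ y.1 := fun hc => hxy (Subtype.ext hc)
    have : ∃ j : Fin (2 * d), x.1 j ≠ y.1 j := by
      by_contra hc
      push_neg at hc
      exact hxy1 (PiLp.ext hc)
    obtain ⟨j, hj⟩ := this
    -- build suitable p q singling out coordinate j
    have hd0 : 0 < d := by have := j.2; omega
    set u := x.1 j with hu
    set w := y.1 j with hw
    set s : ℝ := (π / 2) / (1 + |u| + |w|) with hs_def
    have hden : (0:ℝ) < 1 + |u| + |w| := by positivity
    have hs : 0 < s := div_pos (by positivity) hden
    have hbnd : ∀ r : ℝ, |r| ≤ |u| + |w| → s * r ∈ Set.Icc (-(π/2)) (π/2) := by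
      intro r hr
      have : |s * r| ≤ π / 2 := by
        rw [abs_mul, _root_.abs_of_nonneg hs.le, hs_def]
        rw [div_mul_eq_mul_div, div_le_iff₀ hden]
        nlinarith [Real.pi_pos]
      constructor <;> [linarith [neg_abs_le (s * r)]; linarith [le_abs_self (s * r)]]
    -- the functional x ↦ s * x j
    obtain ⟨p, q, hpq⟩ : ∃ p q : Fin d → ℝ,
        ∀ z : EuclideanSpace ℝ (Fin (2 * d)), Lf d p q z = s * z j := by
      by_cases hjd : j.1 < d
      · set k : Fin d := ⟨j.1, hjd⟩ with hk
        refine ⟨fun k' => if k' = k then s else 0, 0, fun z => ?_⟩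
        rw [Lf]
        rw [Finset.sum_eq_single k]
        · have hlo : lo d k = j := Fin.ext rfl
          simp only [if_pos]
          rw [Pi.zero_apply, zero_mul, add_zero, hlo]
        · intro k' _ hk'
          simp [if_neg hk']
        · intro habs
          exact absurd (Finset.mem_univ k) habs
      · set k : Fin d := ⟨j.1 - d, by have := j.2; omega⟩ with hk
        refine ⟨0, fun k' => if k' = k then s else 0, fun z => ?_⟩
        rw [Lf]
        rw [Finset.sum_eq_single k]
        · have hhi : hi d k = j := by
            refine Fin.ext ?_
            show d + (j.1 - d) = j.1
            omega
          simp only [if_pos]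
          rw [Pi.zero_apply, zero_mul, zero_add, hhi]
        · intro k' _ hk'
          simp [if_neg hk']
        · intro habs
          exact absurd (Finset.mem_univ k) habs
    refine ⟨sinMap p q, ⟨sinMap p q,
      Submodule.subset_span (Set.mem_insert_of_mem _ ⟨p, q, Or.inr rfl⟩), rfl⟩, ?_⟩
    show Real.sin (Lf d p q x.1) ≠ Real.sin (Lf d p q y.1)
    rw [hpq x.1, hpq y.1]
    intro hcontra
    have h1 : s * u ∈ Set.Icc (-(π/2)) (π/2) := hbnd u (le_add_of_nonneg_right (abs_nonneg w))
    have h2 : s * w ∈ Set.Icc (-(π/2)) (π/2) := by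
      refine hbnd w ?_
      linarith [abs_nonneg u]
    have := Real.strictMonoOn_sin.injOn h1 h2 hcontra
    exact hj (mul_left_cancel₀ (ne_of_gt hs) this)
  -- Stone-Weierstrass approximation
  set f' : C(K, ℝ) := ⟨fun x => f x.1, hf.comp continuous_subtype_val⟩ with hf'_def
  obtain ⟨g₀, hg₀⟩ := ContinuousMap.exists_mem_subalgebra_near_continuousMap_of_separatesPoints
    Balg hsep f' (ε / 2) (by positivity)
  -- every element of the span is approximable by ridge nets on K
  have hQ : ∀ g : C(K, ℝ), g ∈ B0 → ∀ ε' : ℝ, 0 < ε' →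
      ∃ G, IsRNet d G ∧ ∀ x : K, |g x - G x.1| ≤ ε' := by
    intro g hg
    induction hg using Submodule.span_induction with
    | mem g hgmem =>
        rcases hgmem with (rfl | ⟨p, q, (rfl | rfl)⟩)
        · intro ε' hε'
          exact ⟨fun _ => 1, isRNet_const d 1, fun x => by simp [le_of_lt hε']⟩
        · intro ε' hε'
          set C : ℝ := (∑ k, (|p k| + |q k|)) * R with hC_def
          obtain ⟨P, hP, hPa⟩ := pl_approx Real.cos Real.continuous_cos (-C) C ε' hε'
          refine ⟨fun x => P (Lf d p q x), isRNet_comp hP p q, fun x => ?_⟩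
          have hmem : Lf d p q x.1 ∈ Set.Icc (-C) C := by
            have := abs_Lf_le d p q x.1
            have h2 : (∑ k, (|p k| + |q k|)) * ‖x.1‖ ≤ C :=
              mul_le_mul_of_nonneg_left (hR x.1 x.2)
                (Finset.sum_nonneg fun k _ => by positivity)
            constructor <;> [linarith [neg_abs_le (Lf d p q x.1)];
              linarith [le_abs_self (Lf d p q x.1)]]
          exact le_of_lt (hPa _ hmem)
        · intro ε' hε'
          set C : ℝ := (∑ k, (|p k| + |q k|)) * R with hC_def
          obtain ⟨P, hP, hPa⟩ := pl_approx Real.sin Real.continuous_sin (-C) C ε' hε'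
          refine ⟨fun x => P (Lf d p q x), isRNet_comp hP p q, fun x => ?_⟩
          have hmem : Lf d p q x.1 ∈ Set.Icc (-C) C := by
            have := abs_Lf_le d p q x.1
            have h2 : (∑ k, (|p k| + |q k|)) * ‖x.1‖ ≤ C :=
              mul_le_mul_of_nonneg_left (hR x.1 x.2)
                (Finset.sum_nonneg fun k _ => by positivity)
            constructor <;> [linarith [neg_abs_le (Lf d p q x.1)];
              linarith [le_abs_self (Lf d p q x.1)]]
          exact le_of_lt (hPa _ hmem)
    | zero =>
        intro ε' hε'
        exact ⟨fun _ => 0, isRNet_const d 0, fun x => by simp [le_of_lt hε']⟩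
    | add g h _ _ ihg ihh =>
        intro ε' hε'
        obtain ⟨G, hG, hGa⟩ := ihg (ε' / 2) (by positivity)
        obtain ⟨H, hH, hHa⟩ := ihh (ε' / 2) (by positivity)
        refine ⟨fun x => G x + H x, isRNet_add hG hH, fun x => ?_⟩
        have h1 := hGa x
        have h2 := hHa x
        have : (g + h) x = g x + h x := rfl
        rw [this]
        calc |g x + h x - (G x.1 + H x.1)| ≤ |g x - G x.1| + |h x - H x.1| := by
              have : g x + h x - (G x.1 + H x.1) = (g x - G x.1) + (h x - H x.1) := by ring
              rw [this]; exact abs_add_le _ _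
          _ ≤ ε' := by linarith
    | smul r g _ ihg =>
        intro ε' hε'
        obtain ⟨G, hG, hGa⟩ := ihg (ε' / (1 + |r|)) (by positivity)
        refine ⟨fun x => r * G x, isRNet_smul r hG, fun x => ?_⟩
        have h1 := hGa x
        have : (r • g) x = r * g x := rfl
        rw [this]
        calc |r * g x - r * G x.1| = |r| * |g x - G x.1| := by
              rw [← abs_mul]; congr 1; ring
          _ ≤ |r| * (ε' / (1 + |r|)) := mul_le_mul_of_nonneg_left h1 (abs_nonneg r)
          _ ≤ ε' := by
              rw [mul_div_assoc']
              rw [div_le_iff₀ (by positivity)]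
              nlinarith [abs_nonneg r]
  obtain ⟨G, hG, hGa⟩ := hQ g₀.1 g₀.2 (ε / 4) (by positivity)
  refine ⟨G, hG, fun x hx => ?_⟩
  have h1 : |f x - g₀.1 ⟨x, hx⟩| < ε / 2 := by
    have := ContinuousMap.norm_coe_le_norm ((g₀ : C(K, ℝ)) - f') ⟨x, hx⟩
    have h2 : ‖((g₀ : C(K, ℝ)) - f') ⟨x, hx⟩‖ = |g₀.1 ⟨x, hx⟩ - f x| := by
      simp [hf'_def, Real.norm_eq_abs]
    rw [h2] at this
    rw [abs_sub_comm]
    exact lt_of_le_of_lt this hg₀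
  have h2 := hGa ⟨x, hx⟩
  calc |f x - G x| ≤ |f x - g₀.1 ⟨x, hx⟩| + |g₀.1 ⟨x, hx⟩ - G x| := by
        have : f x - G x = (f x - g₀.1 ⟨x, hx⟩) + (g₀.1 ⟨x, hx⟩ - G x) := by ring
        rw [this]; exact abs_add_le _ _
    _ < ε := by linarith

/-- Universal approximation of one-hidden-layer complex-reaction networks: for every `d ≥ 1`,
every continuous `f : ℝ^{2d} → ℝ`, every compact `K ⊆ ℝ^{2d}` and every `ε > 0`, there is a
one-hidden-layer complex-reaction network uniformly `ε`-close to `f` on `K`. -/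
theorem complex_reaction_universal_approximation
    (d : ℕ) (hd : 1 ≤ d) (f : EuclideanSpace ℝ (Fin (2 * d)) → ℝ) (hf : Continuous f)
    (K : Set (EuclideanSpace ℝ (Fin (2 * d)))) (hK : IsCompact K) (ε : ℝ) (hε : 0 < ε) :
    ∃ (n : ℕ) (w : Fin n → Fin d → ℂ) (v b : Fin n → ℂ) (a : ℂ),
      ∀ x ∈ K, |f x - fCR w v b a (toC d x)| < ε := by
  obtain ⟨g, hg, hga⟩ := ridge_dense d f hf K hK ε hε
  obtain ⟨n, p, q, c, v, a, rfl⟩ := hg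
  obtain ⟨m, w, V, b, A, hnet⟩ := rnet_to_fCR d K hK n p q c v a
  exact ⟨m, w, V, b, A, fun x hx => by rw [hnet x hx]; exact hga x hx⟩
end

section
/- There exists a constant C_r ≥ 1 with the following property: for every R > 0, every L-Lipschitz function f : [−R, R] → ℝ, and every δ > 0, there exist an integer n_r ≤ 2·C_r·L·R/δ and real parameters a, α_1,…,α_{n_r}, β_1,…,β_{n_r}, b_1,…,b_{n_r} such that the one-hidden-layer ReLU network f_R(x) = ∑_{i=1}^{n_r} α_i·max(β_i·x − b_i, 0) − a satisfies sup_{x ∈ [−R,R]} |f(x) − f_R(x)| ≤ δ. -/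
/-!
Sample `f` on the uniform grid `t i = -R + i · 2R/N` and take its piecewise-linear interpolant.
The difference `max (x - t i) 0 - max (x - t (i + 1)) 0` of two neurons is a ramp climbing from `0`
to the width of the cell `[t i, t (i + 1)]`, so the interpolant is a network with `2N` neurons.
On each cell both `f` and the interpolant are `L`-Lipschitz, which bounds the error by `2L · 2R/N`.
Taking `N = ⌈4LR/δ⌉` gives `C_r = 6`; when `2LR ≤ δ` the constant `f (-R)` is already good enough.
-/

open Set

noncomputable def reluNetwork {n : ℕ} (a : ℝ) (α β b : Fin n → ℝ) (x : ℝ) : ℝ :=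
  (∑ i, α i * max (β i * x - b i) 0) - a

noncomputable def reluInterpolant (f : ℝ → ℝ) (t : ℕ → ℝ) (N : ℕ) (x : ℝ) : ℝ :=
  f (t 0) + ∑ i ∈ Finset.range N,
    slope f (t i) (t (i + 1)) * (max (x - t i) 0 - max (x - t (i + 1)) 0)

theorem exists_lt_mem_Icc_succ {α : Type*} [LinearOrder α] {t : ℕ → α} {N : ℕ} (hN : 0 < N)
    {x : α} (hx : x ∈ Icc (t 0) (t N)) : ∃ k < N, x ∈ Icc (t k) (t (k + 1)) := by
  induction N, hN using Nat.le_induction with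
  | base => exact ⟨0, zero_lt_one, hx⟩
  | succ N hN ih =>
    rcases le_total x (t N) with hxN | hNx
    · obtain ⟨k, hk, hxk⟩ := ih ⟨hx.1, hxN⟩
      exact ⟨k, hk.trans N.lt_succ_self, hxk⟩
    · exact ⟨N, N.lt_succ_self, hNx, hx.2⟩

namespace reluInterpolant

theorem eq_reluNetwork (f : ℝ → ℝ) (t : ℕ → ℝ) (N : ℕ) (x : ℝ) :
    reluInterpolant f t N x =
      reluNetwork (-f (t 0))
        (Fin.append (fun i : Fin N => slope f (t i) (t (i + 1)))
          (fun i : Fin N => -slope f (t i) (t (i + 1))))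
        1 (Fin.append (fun i : Fin N => t i) (fun i : Fin N => t (i + 1))) x := by
  simp only [reluInterpolant, reluNetwork, Fin.sum_univ_add, Fin.append_left, Fin.append_right,
    Pi.one_apply, one_mul, neg_mul, Finset.sum_neg_distrib, mul_sub, Finset.sum_sub_distrib,
    Fin.sum_univ_eq_sum_range (fun i => slope f (t i) (t (i + 1)) * max (x - t i) 0),
    Fin.sum_univ_eq_sum_range (fun i => slope f (t i) (t (i + 1)) * max (x - t (i + 1)) 0)]
  ring

variable {f : ℝ → ℝ} {t : ℕ → ℝ}

theorem succ_of_le (ht : Monotone t) {N : ℕ} {x : ℝ} (hx : x ≤ t N) :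
    reluInterpolant f t (N + 1) x = reluInterpolant f t N x := by
  have hx' : x ≤ t (N + 1) := hx.trans (ht N.le_succ)
  simp [reluInterpolant, Finset.sum_range_succ, max_eq_right (sub_nonpos.2 hx),
    max_eq_right (sub_nonpos.2 hx')]

theorem of_ge (ht : Monotone t) {N : ℕ} {x : ℝ} (hx : t N ≤ x) :
    reluInterpolant f t N x = f (t N) := by
  induction N with
  | zero => simp [reluInterpolant]
  | succ N ih =>
    have hxN : t N ≤ x := (ht N.le_succ).trans hx
    rw [reluInterpolant, Finset.sum_range_succ, ← add_assoc, ← reluInterpolant, ih hxN,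
      max_eq_left (sub_nonneg.2 hxN), max_eq_left (sub_nonneg.2 hx), sub_sub_sub_cancel_left,
      mul_comm, ← smul_eq_mul, sub_smul_slope, vsub_eq_sub, add_sub_cancel]

theorem of_mem_Icc (ht : Monotone t) {N k : ℕ} (hk : k < N) {x : ℝ}
    (hx : x ∈ Icc (t k) (t (k + 1))) :
    reluInterpolant f t N x = f (t k) + slope f (t k) (t (k + 1)) * (x - t k) := by
  induction N, hk using Nat.le_induction with
  | base =>
    rw [reluInterpolant, Finset.sum_range_succ, ← add_assoc, ← reluInterpolant, of_ge ht hx.1,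
      max_eq_left (sub_nonneg.2 hx.1), max_eq_right (sub_nonpos.2 hx.2), sub_zero]
  | succ N hkN ih => rw [succ_of_le ht (hx.2.trans (ht hkN)), ih]

theorem abs_sub_le (ht : Monotone t) {N : ℕ} (hN : 0 < N) {L h : ℝ} (hL : 0 ≤ L)
    (hf : ∀ x ∈ Icc (t 0) (t N), ∀ y ∈ Icc (t 0) (t N), |f x - f y| ≤ L * |x - y|)
    (hmesh : ∀ i < N, t (i + 1) - t i ≤ h) {x : ℝ} (hx : x ∈ Icc (t 0) (t N)) :
    |f x - reluInterpolant f t N x| ≤ 2 * L * h := by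
  obtain ⟨k, hk, hxk⟩ := exists_lt_mem_Icc_succ hN hx
  have hmem : ∀ i ≤ N, t i ∈ Icc (t 0) (t N) := fun i hi => ⟨ht i.zero_le, ht hi⟩
  have hstep : 0 ≤ t (k + 1) - t k := sub_nonneg.2 (ht k.le_succ)
  have hfx : |f x - f (t k)| ≤ L * (x - t k) := by
    simpa only [abs_of_nonneg (sub_nonneg.2 hxk.1)] using hf x hx (t k) (hmem k hk.le)
  have hrise : |slope f (t k) (t (k + 1))| * (t (k + 1) - t k) ≤ L * (t (k + 1) - t k) := by
    have hdiff : f (t (k + 1)) - f (t k) = slope f (t k) (t (k + 1)) * (t (k + 1) - t k) := by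
      rw [mul_comm, ← smul_eq_mul, sub_smul_slope, vsub_eq_sub]
    have := hf (t (k + 1)) (hmem _ hk) (t k) (hmem k hk.le)
    rwa [hdiff, abs_mul, abs_of_nonneg hstep] at this
  rw [of_mem_Icc ht hk hxk]
  calc |f x - (f (t k) + slope f (t k) (t (k + 1)) * (x - t k))|
      ≤ |f x - f (t k)| + |slope f (t k) (t (k + 1)) * (x - t k)| := by
        rw [sub_add_eq_sub_sub]
        exact abs_sub _ _
    _ = |f x - f (t k)| + |slope f (t k) (t (k + 1))| * (x - t k) := by
        rw [abs_mul, abs_of_nonneg (sub_nonneg.2 hxk.1)]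
    _ ≤ L * (x - t k) + |slope f (t k) (t (k + 1))| * (t (k + 1) - t k) := by
        gcongr
        exact hxk.2
    _ ≤ L * h + L * h := by
        have hxh : x - t k ≤ h := by linarith [hxk.2, hmesh k hk]
        exact add_le_add (mul_le_mul_of_nonneg_left hxh hL)
          (hrise.trans (mul_le_mul_of_nonneg_left (hmesh k hk) hL))
    _ = 2 * L * h := by ring

end reluInterpolant

theorem exists_reluNetwork_approx_of_lipschitzOn {f : ℝ → ℝ} {u v L : ℝ} (huv : u ≤ v)
    (hL : 0 ≤ L) (hf : ∀ x ∈ Icc u v, ∀ y ∈ Icc u v, |f x - f y| ≤ L * |x - y|) {N : ℕ}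
    (hN : 0 < N) :
    ∃ (a : ℝ) (α β b : Fin (N + N) → ℝ),
      ∀ x ∈ Icc u v, |f x - reluNetwork a α β b x| ≤ 2 * L * ((v - u) / N) := by
  set t : ℕ → ℝ := fun i => u + i * ((v - u) / N)
  have ht : Monotone t := fun i j hij => by
    have : 0 ≤ (v - u) / N := div_nonneg (sub_nonneg.2 huv) N.cast_nonneg
    simp only [t]
    gcongr
  have ht0 : t 0 = u := by simp [t]
  have htN : t N = v := by
    simp only [t]
    field_simp
    ring
  have hmesh : ∀ i < N, t (i + 1) - t i ≤ (v - u) / N := fun i _ => by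
    simp only [t]
    push_cast
    linarith
  have happrox : ∀ x ∈ Icc u v, |f x - reluInterpolant f t N x| ≤ 2 * L * ((v - u) / N) :=
    fun x hx ↦ reluInterpolant.abs_sub_le ht hN hL (ht0 ▸ htN ▸ hf) hmesh (ht0 ▸ htN ▸ hx)
  simp_rw [reluInterpolant.eq_reluNetwork] at happrox
  exact ⟨_, _, _, _, happrox⟩

/-- There is a constant `C_r ≥ 1` such that every `L`-Lipschitz function `f : [−R,R] → ℝ`
can be approximated within `δ` in sup-norm on `[−R,R]` by a one-hidden-layer ReLU network
`f_R(x) = ∑_{i=1}^{n_r} αᵢ·max(βᵢ·x − bᵢ, 0) − a` with `n_r ≤ 2·C_r·L·R/δ` neurons. -/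
theorem relu_network_approx_lipschitz :
    ∃ Cr : ℝ, 1 ≤ Cr ∧
      ∀ (R L : ℝ), 0 < R →
        ∀ f : ℝ → ℝ,
          (∀ x ∈ Icc (-R) R, ∀ y ∈ Icc (-R) R, |f x - f y| ≤ L * |x - y|) →
          ∀ δ : ℝ, 0 < δ →
            ∃ (n : ℕ), (n : ℝ) ≤ 2 * Cr * L * R / δ ∧
              ∃ (a : ℝ) (α β b : Fin n → ℝ),
                ∀ x ∈ Icc (-R) R,
                  |f x - ((∑ i, α i * max (β i * x - b i) 0) - a)| ≤ δ := by
  refine ⟨6, by norm_num, fun R L hR f hf δ hδ => ?_⟩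
  have hmemR : R ∈ Icc (-R) R := ⟨by linarith, le_rfl⟩
  have hmem_neg : -R ∈ Icc (-R) R := ⟨le_rfl, by linarith⟩
  have hL : 0 ≤ L := by
    have := (abs_nonneg _).trans (hf R hmemR (-R) hmem_neg)
    exact nonneg_of_mul_nonneg_left this (abs_pos.2 (by linarith))
  rcases le_or_gt (2 * L * R) δ with hsmall | hlarge
  · refine ⟨0, by rw [Nat.cast_zero]; positivity, -f (-R), 0, 0, 0, fun x hx => ?_⟩
    have hdist : |x - -R| ≤ 2 * R := abs_le.2 ⟨by linarith [hx.1], by linarith [hx.2]⟩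
    have hbound : L * |x - -R| ≤ δ := (mul_le_mul_of_nonneg_left hdist hL).trans (by linarith)
    simpa using (hf x hx (-R) hmem_neg).trans hbound
  · set N := ⌈4 * L * R / δ⌉₊
    have hN_ge : 4 * L * R / δ ≤ N := Nat.le_ceil _
    have hN_lt : (N : ℝ) < 4 * L * R / δ + 1 := Nat.ceil_lt_add_one (by positivity)
    have hNpos : 0 < N := Nat.ceil_pos.2 (div_pos (by linarith) hδ)
    obtain ⟨a, α, β, b, happrox⟩ :=
      exists_reluNetwork_approx_of_lipschitzOn (by linarith) hL hf hNpos
    refine ⟨N + N, ?_, a, α, β, b, fun x hx => (happrox x hx).trans ?_⟩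
    · have hratio : 1 < 2 * L * R / δ := (one_lt_div hδ).2 hlarge
      have hCr : 2 * 6 * L * R / δ = 6 * (2 * L * R / δ) := by ring
      have hfour : 4 * L * R / δ = 2 * (2 * L * R / δ) := by ring
      push_cast
      linarith
    · rw [div_le_iff₀ hδ] at hN_ge
      rw [mul_div_assoc', div_le_iff₀ (by positivity)]
      linarith
end

section
/- Let σ : ℝ → ℝ be a bounded measurable sigmoidal function, i.e., lim_{t→−∞} σ(t) = 0 and lim_{t→+∞} σ(t) = 1. There exists a constant C > 0 (depending only on σ) such that for every R > 0, every L-Lipschitz function f : [−R,R] → ℝ, and every integer n ≥ 1, there exist real parameters a, α_1,…,α_n, β_1,…,β_n, b_1,…,b_n such that sup_{x ∈ [−R,R]} |f(x) − (∑_{i=1}^n α_i·σ(β_i·x − b_i) − a)| ≤ C·L·R/n. -/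
open Set Filter

/-! On the grid `pᵢ = -R + 2iR/n` take the network
`f(-R) + ∑ᵢ (f(pᵢ₊₁) - f(pᵢ)) σ(β(x - pᵢ₊₁))`. For `x ∈ [p_k, p_{k+1}]`, replacing each
`σ(β(x - pᵢ₊₁))` by the step `1_{i < k}` gives a telescoping sum equal to `f(p_k)`, which is within
`Lh` of `f x`, `h = 2R/n`. The slope `β` is chosen so steep that `σ` is `1/n`-close to its limits
one grid step away from `0`; then all increments except the two nearest to `x` contribute an error
of at most `Lh/n` each, and those two at most `Lh(M + 1)` each, where `|σ| ≤ M`. -/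

lemma exists_pos_forall_abs_sub_le_of_tendsto_atBot_atTop {σ : ℝ → ℝ} {l₀ l₁ : ℝ}
    (h0 : Tendsto σ atBot (nhds l₀)) (h1 : Tendsto σ atTop (nhds l₁)) {ε : ℝ} (hε : 0 < ε) :
    ∃ T > 0, (∀ t, T ≤ t → |σ t - l₁| ≤ ε) ∧ ∀ t, t ≤ -T → |σ t - l₀| ≤ ε := by
  obtain ⟨T₁, hT₁⟩ := eventually_atTop.1 (h1.eventually (Metric.closedBall_mem_nhds l₁ hε))
  obtain ⟨T₀, hT₀⟩ := eventually_atBot.1 (h0.eventually (Metric.closedBall_mem_nhds l₀ hε))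
  refine ⟨max 1 (max T₁ (-T₀)), by positivity, fun t ht => hT₁ t ?_, fun t ht => hT₀ t ?_⟩
  · exact (le_max_left _ _).trans ((le_max_right _ _).trans ht)
  · linarith [(le_max_right T₁ (-T₀)).trans (le_max_right 1 _)]

lemma exists_lt_mem_Icc_grid {R : Type*} [Ring R] [LinearOrder R] [IsStrictOrderedRing R]
    {a h x : R} {n : ℕ} (hn : 1 ≤ n) (hx : x ∈ Icc a (a + n * h)) :
    ∃ k < n, a + k * h ≤ x ∧ x ≤ a + (k + 1) * h := by
  induction n, hn using Nat.le_induction with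
  | base => exact ⟨0, one_pos, by simpa using hx.1, by simpa using hx.2⟩
  | succ n hn ih =>
    by_cases hxn : x ≤ a + n * h
    · obtain ⟨k, hk, hkx⟩ := ih ⟨hx.1, hxn⟩
      exact ⟨k, hk.trans n.lt_succ_self, hkx⟩
    · exact ⟨n, n.lt_succ_self, (not_le.1 hxn).le, by simpa using hx.2⟩

lemma sum_range_sub_mul_ite_lt {R : Type*} [Ring R] (g : ℕ → R) {k n : ℕ} (hk : k ≤ n) :
    ∑ i ∈ Finset.range n, (g (i + 1) - g i) * (if i < k then 1 else 0) = g k - g 0 := by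
  have htail : ∑ i ∈ Finset.Ico k n, (g (i + 1) - g i) * (if i < k then 1 else 0) = 0 :=
    Finset.sum_eq_zero fun i hi => by simp [(Finset.mem_Ico.1 hi).1]
  rw [← Finset.sum_range_add_sum_Ico _ hk, htail, add_zero, ← Finset.sum_range_sub g k]
  exact Finset.sum_congr rfl fun i hi => by simp [Finset.mem_range.1 hi]

lemma Finset.sum_le_card_mul_add_card_mul {ι R : Type*} [DecidableEq ι] [Semiring R]
    [PartialOrder R] [IsOrderedRing R] {s E : Finset ι} {g : ι → R} {ε B : R}
    (hε : 0 ≤ ε) (hB : 0 ≤ B) (hoff : ∀ i ∈ s, i ∉ E → g i ≤ ε)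
    (hon : ∀ i ∈ s, g i ≤ B) : ∑ i ∈ s, g i ≤ s.card * ε + E.card * B := by
  rw [← Finset.sum_filter_add_sum_filter_not s (· ∉ E)]
  gcongr
  · calc _ ≤ (s.filter (· ∉ E)).card • ε := Finset.sum_le_card_nsmul _ _ _ fun i hi =>
          hoff i (Finset.mem_filter.1 hi).1 (Finset.mem_filter.1 hi).2
      _ ≤ s.card * ε := by rw [nsmul_eq_mul]; gcongr; exact Finset.filter_subset _ _
  · calc _ ≤ (s.filter (· ∈ E)).card • B := by
          simp only [not_not]
          exact Finset.sum_le_card_nsmul _ _ _ fun i hi => hon i (Finset.mem_filter.1 hi).1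
      _ ≤ E.card * B := by
          rw [nsmul_eq_mul]; gcongr; exact fun i hi => (Finset.mem_filter.1 hi).2

lemma abs_sum_range_sub_mul_sub_sub_le {R : Type*} [Ring R] [LinearOrder R] [IsStrictOrderedRing R]
    {g w : ℕ → R} {n k : ℕ} {D ε B : R} (hk : k ≤ n)
    (hD : 0 ≤ D) (hε : 0 ≤ ε) (hB : 0 ≤ B) (hg : ∀ i < n, |g (i + 1) - g i| ≤ D)
    (hoff : ∀ i < n, i ≠ k - 1 → i ≠ k → |w i - (if i < k then 1 else 0)| ≤ ε)
    (hon : ∀ i < n, |w i - (if i < k then 1 else 0)| ≤ B) :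
    |∑ i ∈ Finset.range n, (g (i + 1) - g i) * w i - (g k - g 0)| ≤ D * (n * ε + 2 * B) := by
  rw [← sum_range_sub_mul_ite_lt g hk, ← Finset.sum_sub_distrib]
  simp only [← mul_sub]
  calc _ ≤ ∑ i ∈ Finset.range n, |(g (i + 1) - g i) * (w i - if i < k then 1 else 0)| :=
        Finset.abs_sum_le_sum_abs _ _
    _ ≤ ∑ i ∈ Finset.range n, D * |w i - if i < k then 1 else 0| := by
        gcongr with i hi
        rw [abs_mul]
        gcongr
        exact hg i (Finset.mem_range.1 hi)
    _ = D * ∑ i ∈ Finset.range n, |w i - if i < k then 1 else 0| := (Finset.mul_sum ..).symm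
    _ ≤ D * (n * ε + 2 * B) := by
        gcongr
        calc _ ≤ (Finset.range n).card * ε + ({k - 1, k} : Finset ℕ).card * B :=
              Finset.sum_le_card_mul_add_card_mul hε hB
                (fun i hi hiE => by
                  simp only [Finset.mem_insert, Finset.mem_singleton, not_or] at hiE
                  exact hoff i (Finset.mem_range.1 hi) hiE.1 hiE.2)
                fun i hi => hon i (Finset.mem_range.1 hi)
          _ ≤ n * ε + 2 * B := by
              rw [Finset.card_range]
              gcongr
              exact_mod_cast Finset.card_le_two

lemma abs_sigmoid_grid_sub_ite_le {σ : ℝ → ℝ} {T ε a h x : ℝ} {k i : ℕ} (hT : 0 < T)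
    (hh : 0 < h) (hσ1 : ∀ t, T ≤ t → |σ t - 1| ≤ ε) (hσ0 : ∀ t, t ≤ -T → |σ t| ≤ ε)
    (hkx : a + k * h ≤ x) (hxk : x ≤ a + (k + 1) * h) (hik : i ≠ k - 1) (hik' : i ≠ k) :
    |σ (T / h * (x - (a + (i + 1) * h))) - (if i < k then 1 else 0)| ≤ ε := by
  by_cases hlt : i < k
  · rw [if_pos hlt]
    apply hσ1
    have hi : (i : ℝ) + 2 ≤ k := by exact_mod_cast (by omega : i + 2 ≤ k)
    calc T = T / h * h := by field_simp
      _ ≤ T / h * (x - (a + (i + 1) * h)) := by gcongr; nlinarith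
  · rw [if_neg hlt, sub_zero]
    apply hσ0
    have hi : (k : ℝ) + 1 ≤ i := by exact_mod_cast (by omega : k + 1 ≤ i)
    calc T / h * (x - (a + (i + 1) * h)) ≤ T / h * (-h) := by gcongr; nlinarith
      _ = -T := by field_simp

theorem abs_sub_sigmoid_grid_sum_le {σ f : ℝ → ℝ} {M T ε a h L x : ℝ} {n : ℕ}
    (hM : ∀ t, |σ t| ≤ M) (hT : 0 < T) (hσ1 : ∀ t, T ≤ t → |σ t - 1| ≤ ε)
    (hσ0 : ∀ t, t ≤ -T → |σ t| ≤ ε) (hε : 0 ≤ ε) (hh : 0 < h) (hn : 1 ≤ n)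
    (hf : ∀ x ∈ Icc a (a + n * h), ∀ y ∈ Icc a (a + n * h), |f x - f y| ≤ L * |x - y|)
    (hx : x ∈ Icc a (a + n * h)) :
    |f x - (f a + ∑ i ∈ Finset.range n,
        (f (a + (i + 1) * h) - f (a + i * h)) * σ (T / h * (x - (a + (i + 1) * h))))| ≤
      L * h * (2 * M + 3 + n * ε) := by
  obtain ⟨k, hkn, hkx, hxk⟩ := exists_lt_mem_Icc_grid hn hx
  let g : ℕ → ℝ := fun i => f (a + i * h)
  have hgrid : ∀ i ≤ n, a + i * h ∈ Icc a (a + n * h) := fun i hi =>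
    ⟨by nlinarith [(Nat.cast_nonneg i : (0 : ℝ) ≤ i)], by gcongr⟩
  have hg : ∀ i < n, |g (i + 1) - g i| ≤ L * h := fun i hi => by
    have := hf _ (hgrid (i + 1) hi) _ (hgrid i hi.le)
    rwa [show a + ((i + 1 : ℕ) : ℝ) * h - (a + i * h) = h by push_cast; ring, abs_of_pos hh] at this
  have hLh : 0 ≤ L * h := (abs_nonneg _).trans (hg 0 hn)
  have hxg : |f x - g k| ≤ L * h := by
    refine (hf x hx _ (hgrid k hkn.le)).trans ?_
    gcongr
    · exact (mul_nonneg_iff_of_pos_right hh).1 hLh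
    · rw [abs_of_nonneg (by linarith)]; linarith
  have hsum := abs_sum_range_sub_mul_sub_sub_le (w := fun i => σ (T / h * (x - (a + (i + 1) * h))))
    hkn.le hLh hε
    (by linarith [(abs_nonneg _).trans (hM 0)] : (0 : ℝ) ≤ M + 1) hg
    (fun i _ => abs_sigmoid_grid_sub_ite_le hT hh hσ1 hσ0 hkx hxk)
    (fun i _ => (abs_sub _ _).trans (add_le_add (hM _) (by split_ifs <;> simp)))
  calc _ = |(f x - g k) - (∑ i ∈ Finset.range n, (g (i + 1) - g i) *
        σ (T / h * (x - (a + (i + 1) * h))) - (g k - g 0))| := by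
        congr 1
        simp only [g, Nat.cast_succ, Nat.cast_zero, zero_mul, add_zero]
        ring
    _ ≤ |f x - g k| + _ := abs_sub _ _
    _ ≤ L * h + L * h * (n * ε + 2 * (M + 1)) := add_le_add hxg hsum
    _ = L * h * (2 * M + 3 + n * ε) := by ring

theorem sigmoidal_network_approx_lipschitz_general
    (σ : ℝ → ℝ) (hbdd : ∃ M : ℝ, ∀ t : ℝ, |σ t| ≤ M)
    (h0 : Tendsto σ atBot (nhds 0)) (h1 : Tendsto σ atTop (nhds 1)) :
    ∃ C : ℝ, 0 < C ∧
      ∀ (R L : ℝ), 0 < R →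
        ∀ f : ℝ → ℝ,
          (∀ x ∈ Icc (-R) R, ∀ y ∈ Icc (-R) R, |f x - f y| ≤ L * |x - y|) →
          ∀ n : ℕ, 1 ≤ n →
            ∃ (a : ℝ) (α β b : Fin n → ℝ),
              ∀ x ∈ Icc (-R) R,
                |f x - ((∑ i, α i * σ (β i * x - b i)) - a)| ≤ C * L * R / n := by
  obtain ⟨M, hM⟩ := hbdd
  have hM0 : 0 ≤ M := (abs_nonneg _).trans (hM 0)
  refine ⟨4 * M + 8, by positivity, fun R L hR f hf n hn => ?_⟩
  have hn0 : (0 : ℝ) < n := by exact_mod_cast hn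
  obtain ⟨T, hT, hT1, hT0⟩ :=
    exists_pos_forall_abs_sub_le_of_tendsto_atBot_atTop h0 h1 (inv_pos.2 hn0)
  set h := 2 * R / n with hh_def
  have hh : 0 < h := by positivity
  have hIcc : Icc (-R) R = Icc (-R) (-R + n * h) := by rw [hh_def]; field_simp; ring_nf
  refine ⟨-f (-R), fun i => f (-R + (i + 1) * h) - f (-R + i * h), fun _ => T / h,
    fun i => T / h * (-R + (i + 1) * h), fun x hx => ?_⟩
  rw [hIcc] at hf hx
  have key := abs_sub_sigmoid_grid_sum_le hM hT hT1 (by simpa using hT0) (inv_nonneg.2 hn0.le)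
    hh hn hf hx
  simp only [← mul_sub]
  rw [Fin.sum_univ_eq_sum_range (fun i => (f (-R + (i + 1) * h) - f (-R + i * h)) *
    σ (T / h * (x - (-R + (i + 1) * h)))) n, sub_neg_eq_add, add_comm _ (f (-R))]
  refine key.trans_eq ?_
  rw [hh_def]
  field_simp
  ring

/-- For a bounded measurable sigmoidal activation `σ` (i.e. `σ(t) → 0` as `t → −∞` and
`σ(t) → 1` as `t → +∞`), there is a constant `C > 0` (depending only on `σ`) such that every
`L`-Lipschitz function `f : [−R,R] → ℝ` can be approximated on `[−R,R]`, within `C·L·R/n`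
in sup-norm, by a one-hidden-layer network `∑_{i=1}^n αᵢ·σ(βᵢ·x − bᵢ) − a`. -/
theorem sigmoidal_network_approx_lipschitz
    (σ : ℝ → ℝ) (hmeas : Measurable σ) (hbdd : ∃ M : ℝ, ∀ t : ℝ, |σ t| ≤ M)
    (h0 : Tendsto σ atBot (nhds 0)) (h1 : Tendsto σ atTop (nhds 1)) :
    ∃ C : ℝ, 0 < C ∧
      ∀ (R L : ℝ), 0 < R →
        ∀ f : ℝ → ℝ,
          (∀ x ∈ Icc (-R) R, ∀ y ∈ Icc (-R) R, |f x - f y| ≤ L * |x - y|) →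
          ∀ n : ℕ, 1 ≤ n →
            ∃ (a : ℝ) (α β b : Fin n → ℝ),
              ∀ x ∈ Icc (-R) R,
                |f x - ((∑ i, α i * σ (β i * x - b i)) - a)| ≤ C * L * R / n :=
  sigmoidal_network_approx_lipschitz_general σ hbdd h0 h1
end
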